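/- arXiv:2405.01807 — 3 statements merged into one kernel-verified Lean document; each statement's English description precedes it below -/
import Mathlib

section
/- For positive integers t and a ≥ 2, the product P = ∏_{j=1}^{t} (ja)/(ja+1) satisfies P^a ≥ 1/(ta+1). -/
/-!
By Bernoulli's inequality, `(b / (b + 1)) ^ a ≥ 1 - a / (b + 1)`. With `b = (t + 1) a` the right-hand
side is `(t a + 1) / ((t + 1) a + 1)`, the ratio of consecutive terms of `1 / (t a + 1)`, so the
bound follows by induction on `t`.
-/

lemma one_sub_div_le_div_add_one_pow (n : ℕ) {x : ℝ} (hx : 0 ≤ x) :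
    1 - n / (x + 1) ≤ (x / (x + 1)) ^ n := by
  have hx1 : 0 < x + 1 := by linarith
  have hsplit : x / (x + 1) = 1 + -(1 / (x + 1)) := by field_simp; ring
  have hle : 1 / (x + 1) ≤ 1 := (div_le_one hx1).2 (by linarith)
  calc 1 - n / (x + 1) = 1 + n * -(1 / (x + 1)) := by ring
    _ ≤ (1 + -(1 / (x + 1))) ^ n := one_add_mul_le_pow (by linarith) n
    _ = (x / (x + 1)) ^ n := by rw [hsplit]

theorem product_pow_lower_bound_general (t a : ℕ) :
    (∏ j ∈ Finset.Icc 1 t, ((j*a : ℝ) / (j*a + 1)))^a ≥ 1 / (t*a + 1) := by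
  induction t with
  | zero => simp
  | succ t ih =>
    rw [Finset.prod_Icc_succ_top (Nat.le_add_left 1 t), mul_pow]
    push_cast at ih ⊢
    set b : ℝ := (t + 1) * a
    have hb : 0 ≤ b := by positivity
    have hfactor : 1 - a / (b + 1) = (t * a + 1) / (b + 1) := by
      field_simp
      ring
    have hstep : (t * a + 1) / (b + 1) ≤ (b / (b + 1)) ^ a :=
      hfactor ▸ one_sub_div_le_div_add_one_pow a hb
    calc 1 / (b + 1) = 1 / (t * a + 1) * ((t * a + 1) / (b + 1)) := by field_simp
      _ ≤ _ := by gcongr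

theorem product_pow_lower_bound (t a : ℕ) (ht : 0 < t) (ha : 2 ≤ a) :
    (∏ j ∈ Finset.Icc 1 t, ((j*a : ℝ) / (j*a + 1)))^a ≥ 1 / (t*a + 1) :=
  product_pow_lower_bound_general t a
end

section
/- For positive integers t and a ≥ 2, the product P = ∏_{j=1}^{t} (ja)/(ja+1) satisfies P^a ≤ 1/(t+1). -/
/-!
Bernoulli's inequality gives `(1 + 1/(j a))^a ≥ 1 + 1/j`, i.e. each factor satisfies
`(j a/(j a + 1))^a ≤ j/(j + 1)`, and the product of the right-hand sides telescopes to `1/(t + 1)`.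
-/

lemma one_add_inv_le_one_add_inv_mul_pow {x : ℝ} (hx : 0 < x) {n : ℕ} (hn : n ≠ 0) :
    1 + x⁻¹ ≤ (1 + (n * x)⁻¹) ^ n := by
  have hinv : 0 < ((n : ℝ) * x)⁻¹ := by positivity
  calc 1 + x⁻¹ = 1 + n * (n * x)⁻¹ := by field_simp
    _ ≤ (1 + (n * x)⁻¹) ^ n := one_add_mul_le_pow (by linarith) n

lemma div_add_one_eq_inv_one_add_inv {K : Type*} [Field K] {y : K} (hy : y ≠ 0) :
    y / (y + 1) = (1 + y⁻¹)⁻¹ := by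
  rw [inv_eq_one_div y, one_add_div hy, inv_div]

lemma mul_div_mul_add_one_pow_le {x : ℝ} (hx : 0 < x) {n : ℕ} (hn : n ≠ 0) :
    (n * x / (n * x + 1)) ^ n ≤ x / (x + 1) := by
  have hnx : 0 < (n : ℝ) * x := by positivity
  rw [div_add_one_eq_inv_one_add_inv hx.ne', div_add_one_eq_inv_one_add_inv hnx.ne', inv_pow]
  exact inv_anti₀ (by positivity) (one_add_inv_le_one_add_inv_mul_pow hx hn)

lemma prod_Icc_div_add_one (t : ℕ) : ∏ j ∈ Finset.Icc 1 t, ((j : ℝ) / (j + 1)) = 1 / (t + 1) := by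
  induction t with
  | zero => simp
  | succ n ih =>
    rw [Finset.prod_Icc_succ_top (by omega), ih]
    push_cast
    field_simp

theorem product_pow_upper_bound_general (t a : ℕ) (ha : 2 ≤ a) :
    (∏ j ∈ Finset.Icc 1 t, ((j*a : ℝ) / (j*a + 1)))^a ≤ 1 / (t + 1) := by
  rw [← Finset.prod_pow, ← prod_Icc_div_add_one t]
  refine Finset.prod_le_prod (fun j _ => by positivity) fun j hj => ?_
  have hj : (0 : ℝ) < j := by exact_mod_cast (Finset.mem_Icc.mp hj).1
  rw [mul_comm (j : ℝ)]
  exact mul_div_mul_add_one_pow_le hj (by omega)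

theorem product_pow_upper_bound (t a : ℕ) (ht : 0 < t) (ha : 2 ≤ a) :
    (∏ j ∈ Finset.Icc 1 t, ((j*a : ℝ) / (j*a + 1)))^a ≤ 1 / (t + 1) :=
  product_pow_upper_bound_general t a ha
end

section
/- Fix G < 0 and R > 1 with C := -G·ln R > ln²2 + 2 ln 2. Then the utility U(k) = R^{G/ln(k+1)} - k satisfies U(k) ≤ 0 for all k ∈ (0,1], with U(0) interpreted as 0 (limit as k → 0+ of R^{G/ln(k+1)} is 0). -/
/-!
With `C = -G log R`, `R ^ (G / log (k + 1)) ≤ k` is equivalent to `-log k · log (k + 1) ≤ C`.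
For `k < 1` the bounds `log (k + 1) ≤ k` and `-log k ≤ 1/k - 1` make the left side at most
`1 - k < 1`, and for `k ≥ 1` it is nonpositive; the threshold `log² 2 + 2 log 2 ≈ 1.87`
exceeds `1`. The limit holds because `G / log (k + 1) → -∞` as `k → 0⁺`.
-/

open Real Filter Topology

theorem neg_one_lt_log_mul_log_add_one {k : ℝ} (hk : 0 < k) : -1 < log k * log (k + 1) := by
  have hL : 0 < log (k + 1) := log_pos (by linarith)
  rcases le_or_gt 0 (log k) with hlog | hlog
  · nlinarith
  · have hlow : 1 - k⁻¹ ≤ log k := one_sub_inv_le_log_of_pos hk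
    have hup : log (k + 1) ≤ k := by linarith [log_le_sub_one_of_pos (by linarith : 0 < k + 1)]
    calc -1 < k - 1 := by linarith
      _ = (1 - k⁻¹) * k := by field_simp
      _ ≤ (1 - k⁻¹) * log (k + 1) := mul_le_mul_of_nonpos_left hup (by linarith)
      _ ≤ log k * log (k + 1) := mul_le_mul_of_nonneg_right hlow hL.le

theorem rpow_div_log_add_one_le_self {R G k : ℝ} (hR : 0 < R) (hk : 0 < k)
    (hC : 1 ≤ -G * log R) : R ^ (G / log (k + 1)) ≤ k := by
  rw [rpow_le_iff_le_log hR hk, div_mul_eq_mul_div, div_le_iff₀ (log_pos (by linarith))]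
  linarith [neg_one_lt_log_mul_log_add_one hk]

theorem tendsto_log_add_one_nhdsGT_zero :
    Tendsto (fun k : ℝ => log (k + 1)) (𝓝[>] 0) (𝓝[>] 0) := by
  refine tendsto_nhdsWithin_of_tendsto_nhds_of_eventually_within _ ?_ ?_
  · have : ContinuousAt (fun k : ℝ => log (k + 1)) 0 :=
      (continuousAt_id.add continuousAt_const).log (by norm_num)
    simpa using this.tendsto.mono_left nhdsWithin_le_nhds
  · filter_upwards [self_mem_nhdsWithin] with k (hk : 0 < k)
    exact log_pos (by linarith)

theorem tendsto_rpow_div_log_add_one_nhdsGT_zero {R G : ℝ} (hR : 1 < R) (hG : G < 0) :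
    Tendsto (fun k : ℝ => R ^ (G / log (k + 1))) (𝓝[>] 0) (𝓝 0) := by
  have hexp : Tendsto (fun k : ℝ => G / log (k + 1)) (𝓝[>] 0) atBot := by
    simp_rw [div_eq_mul_inv]
    exact (tendsto_inv_nhdsGT_zero.comp tendsto_log_add_one_nhdsGT_zero).const_mul_atTop_of_neg hG
  exact (tendsto_rpow_atBot_of_base_gt_one R hR).comp hexp

theorem utility_nonpos_of_large_cost (G R : ℝ) (hG : G < 0) (hR : 1 < R)
    (hC : -G * Real.log R > (Real.log 2)^2 + 2 * Real.log 2)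
    (U : ℝ → ℝ) (hU : ∀ k : ℝ, U k = R ^ (G / Real.log (k+1)) - k) :
    (∀ k ∈ Set.Ioc (0:ℝ) 1, U k ≤ 0) ∧
    Filter.Tendsto (fun k : ℝ => R ^ (G / Real.log (k+1)))
      (nhdsWithin 0 (Set.Ioi 0)) (nhds 0) := by
  have hC1 : 1 ≤ -G * log R := by nlinarith [log_two_gt_d9]
  refine ⟨fun k hk => ?_, tendsto_rpow_div_log_add_one_nhdsGT_zero hR hG⟩
  rw [hU]
  linarith [rpow_div_log_add_one_le_self (by linarith) hk.1 hC1]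
end
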